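/- Uniqueness of the bimodule homomorphism: Let M be a von Neumann algebra, A a C*-algebra, C ⊆ A a unital sub-C*-algebra, π₁, π₂ : A → M unital *-homomorphisms, and φ : A → M a completely positive map which is a C-bimodule map with respect to π₁ (restricted to C). Then φ is a C-bimodule map with respect to π₂ (restricted to C) if and only if there exists a projection e ∈ π₁(C)′ ∩ π₂(C)′ such that φ(A) ⊆ eMe and (π₁ - π₂)(C) ⊆ e^⊥ M e^⊥, where e^⊥ = 1 - e. -/

import Mathlib

set_option synthInstance.maxHeartbeats 1000000
set_option maxHeartbeats 1000000

open scoped Matrix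

noncomputable section

/-- A map between (possibly non-unital) star rings is *completely positive* if each matrix
amplification maps positive elements (i.e. elements of the form `yᴴ * y`, which in a
C⋆-algebra are exactly the positive elements) to positive elements. -/
def CompletelyPositive {A B : Type*} [NonUnitalNonAssocSemiring A] [StarRing A]
    [NonUnitalNonAssocSemiring B] [StarRing B] (f : A → B) : Prop :=
  ∀ (n : ℕ) (x : Matrix (Fin n) (Fin n) A),
    (∃ y : Matrix (Fin n) (Fin n) A, x = yᴴ * y) →
    ∃ z : Matrix (Fin n) (Fin n) B, x.map f = zᴴ * z

/-- `f : A → W` is a `C`-bimodule map with respect to `π : C → W`, i.e.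
`f (c₁ * a * c₂) = π c₁ * f a * π c₂`. -/
def IsBimoduleMap {A W : Type*} [Ring A] [Algebra ℂ A] [StarRing A] [StarModule ℂ A] [Mul W]
    (C : StarSubalgebra ℂ A) (π : ↥C → W) (f : A → W) : Prop :=
  ∀ (a : A) (c₁ c₂ : C), f (↑c₁ * a * ↑c₂) = π c₁ * f a * π c₂

/-! Let `e` be the projection onto the closed span of the ranges of all `φ a` and `(φ a)⋆`.
If `φ` is a bimodule map for both `π₁` and `π₂`, this subspace is invariant under the
`⋆`-closed sets `πᵢ(C)`, so `e` commutes with them; it is invariant under `M′` because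
`φ(A) ⊆ M`, so `e ∈ M″ = M`; and every `π₁ c - π₂ c` vanishes on it. Conversely, if `φ a`
lives in the corner `eMe` and `π₁ c - π₂ c` in the complementary corner, their products
vanish, so `π₁ c` and `π₂ c` act identically on `φ a` from either side. -/

section StarRing

variable {R : Type*} [Ring R]

theorem IsIdempotentElem.mul_eq_zero_of_eq_corners {e x d : R} (he : IsIdempotentElem e)
    (hx : x = e * x * e) (hd : d = (1 - e) * d * (1 - e)) : d * x = 0 ∧ x * d = 0 := by
  rw [hx, hd]
  simp only [mul_assoc]
  rw [← mul_assoc (1 - e) e, he.one_sub_mul_self, ← mul_assoc e (1 - e), he.mul_one_sub_self]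
  simp

theorem eq_one_sub_mul_mul_one_sub {e d : R} (hed : e * d = 0) (hde : d * e = 0) :
    d = (1 - e) * d * (1 - e) := by
  simp only [sub_mul, mul_sub, one_mul, mul_one, hed, hde, sub_zero]

theorem IsStarProjection.commute_of_mul_mul_eq [StarRing R] {p T : R} (hp : IsStarProjection p)
    (hT : p * T * p = T * p) (hT' : p * star T * p = star T * p) : Commute p T := by
  have : p * T * p = p * T := by
    simpa [star_mul, hp.isSelfAdjoint.star_eq, mul_assoc] using congrArg star hT'
  exact this.symm.trans hT

end StarRing

section ClosedSpanRanges

variable {𝕜 E : Type*} [RCLike 𝕜] [NormedAddCommGroup E] [InnerProductSpace 𝕜 E]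
  {S : Set (E →L[𝕜] E)} {T X : E →L[𝕜] E}

variable (S) in
def closedSpanRanges : Submodule 𝕜 E :=
  (Submodule.span 𝕜 (⋃ T ∈ S, Set.range T)).topologicalClosure

theorem range_le_closedSpanRanges (hT : T ∈ S) : T.range ≤ closedSpanRanges S := by
  rintro _ ⟨x, rfl⟩
  exact Submodule.le_topologicalClosure _
    (Submodule.subset_span (Set.mem_biUnion hT (Set.mem_range_self x)))

theorem closedSpanRanges_mem_invtSubmodule
    (hX : Set.MapsTo X (⋃ T ∈ S, Set.range T) (⋃ T ∈ S, Set.range T)) :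
    closedSpanRanges S ∈ Module.End.invtSubmodule X := by
  refine Submodule.topologicalClosure_mem_invtSubmodule ?_
  rw [Module.End.mem_invtSubmodule, Submodule.span_le]
  exact hX.mono_right Submodule.subset_span

theorem closedSpanRanges_mem_invtSubmodule_of_mul_mem (hX : ∀ T ∈ S, X * T ∈ S) :
    closedSpanRanges S ∈ Module.End.invtSubmodule X :=
  closedSpanRanges_mem_invtSubmodule <| by
    simp only [Set.MapsTo, Set.mem_iUnion, Set.mem_range]
    rintro _ ⟨T, hT, x, rfl⟩
    exact ⟨X * T, hX T hT, x, rfl⟩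

theorem closedSpanRanges_mem_invtSubmodule_of_commute (hX : ∀ T ∈ S, Commute X T) :
    closedSpanRanges S ∈ Module.End.invtSubmodule X :=
  closedSpanRanges_mem_invtSubmodule <| by
    simp only [Set.MapsTo, Set.mem_iUnion, Set.mem_range]
    rintro _ ⟨T, hT, x, rfl⟩
    exact ⟨T, hT, X x, congr($((hX T hT).eq) x).symm⟩

variable [CompleteSpace E]

instance : (closedSpanRanges S).HasOrthogonalProjection := by
  unfold closedSpanRanges
  infer_instance

theorem starProjection_closedSpanRanges_mul (hT : T ∈ S) :
    (closedSpanRanges S).starProjection * T = T := by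
  ext x
  exact Submodule.starProjection_eq_self_iff.mpr (range_le_closedSpanRanges hT ⟨x, rfl⟩)

theorem mul_starProjection_closedSpanRanges (hT : star T ∈ S) :
    T * (closedSpanRanges S).starProjection = T := by
  simpa [star_mul, (isSelfAdjoint_starProjection _).star_eq] using
    congrArg star (starProjection_closedSpanRanges_mul hT)

theorem commute_starProjection_closedSpanRanges (hX : ∀ T ∈ S, X * T ∈ S)
    (hX' : ∀ T ∈ S, star X * T ∈ S) :
    Commute (closedSpanRanges S).starProjection X := by
  have hconj {Y : E →L[𝕜] E} (hY : ∀ T ∈ S, Y * T ∈ S) :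
      (closedSpanRanges S).starProjection * Y * (closedSpanRanges S).starProjection =
        Y * (closedSpanRanges S).starProjection :=
    ContinuousLinearMap.IsIdempotentElem.conj_eq_of_range_mem_invtSubmodule
      (Submodule.isIdempotentElem_starProjection _) <| by
        rw [Submodule.range_starProjection]
        exact closedSpanRanges_mem_invtSubmodule_of_mul_mem hY
  exact isStarProjection_starProjection.commute_of_mul_mul_eq (hconj hX) (hconj hX')

theorem mul_starProjection_closedSpanRanges_eq_zero (hX : ∀ T ∈ S, X * T = 0) :
    X * (closedSpanRanges S).starProjection = 0 := by
  have hle : closedSpanRanges S ≤ X.ker := by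
    refine Submodule.topologicalClosure_minimal _ ?_ X.isClosed_ker
    rw [Submodule.span_le]
    simp only [Set.iUnion_subset_iff]
    rintro T hT _ ⟨x, rfl⟩
    exact congr($(hX T hT) x)
  ext x
  exact hle (Submodule.starProjection_apply_mem _ x)

end ClosedSpanRanges

theorem starProjection_closedSpanRanges_mem {H : Type*} [NormedAddCommGroup H]
    [InnerProductSpace ℂ H] [CompleteSpace H] (M : VonNeumannAlgebra H) {S : Set (H →L[ℂ] H)}
    (hS : S ⊆ M) : (closedSpanRanges S).starProjection ∈ M := by
  rw [VonNeumannAlgebra.IsStarProjection.mem_iff isStarProjection_starProjection,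
    Submodule.range_starProjection]
  intro y hy
  exact closedSpanRanges_mem_invtSubmodule_of_commute fun T hT =>
    (VonNeumannAlgebra.mem_commutant_iff.mp hy T (hS hT)).symm

section Bimodule

variable {A B : Type*} [Ring A] [Algebra ℂ A] [StarRing A] [StarModule ℂ A] [Ring B]
  [Algebra ℂ B] [StarRing B] {C : StarSubalgebra ℂ A} {π π₁ π₂ : A →⋆ₐ[ℂ] B} {φ : A → B}

theorem IsBimoduleMap.mul_apply (h : IsBimoduleMap C (fun c : C => π ↑c) φ) (c : C) (a : A) :
    π c * φ a = φ (c * a) := by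
  simpa using (h a c 1).symm

theorem IsBimoduleMap.apply_mul (h : IsBimoduleMap C (fun c : C => π ↑c) φ) (c : C) (a : A) :
    φ a * π c = φ (a * c) := by
  simpa using (h a 1 c).symm

theorem IsBimoduleMap.mul_star_apply (h : IsBimoduleMap C (fun c : C => π ↑c) φ) (c : C)
    (a : A) : π c * star (φ a) = star (φ (a * star c)) := by
  rw [← h.apply_mul (star c) a, star_mul, StarMemClass.coe_star, map_star, star_star]

theorem IsBimoduleMap.mul_mem_range_union_star (h : IsBimoduleMap C (fun c : C => π ↑c) φ)
    (c : C) :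
    ∀ T ∈ Set.range φ ∪ star (Set.range φ), π c * T ∈ Set.range φ ∪ star (Set.range φ) := by
  rintro T (⟨a, rfl⟩ | ⟨a, ha⟩)
  · exact Or.inl ⟨_, (h.mul_apply c a).symm⟩
  · rw [← star_star T, ← ha, h.mul_star_apply]
    exact Or.inr (by simp)

theorem IsBimoduleMap.sub_mul_eq_zero (h₁ : IsBimoduleMap C (fun c : C => π₁ ↑c) φ)
    (h₂ : IsBimoduleMap C (fun c : C => π₂ ↑c) φ) (c : C) :
    ∀ T ∈ Set.range φ ∪ star (Set.range φ), (π₁ c - π₂ c) * T = 0 := by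
  rintro T (⟨a, rfl⟩ | ⟨a, ha⟩)
  · rw [sub_mul, h₁.mul_apply, h₂.mul_apply, sub_self]
  · rw [← star_star T, ← ha, sub_mul, h₁.mul_star_apply, h₂.mul_star_apply, sub_self]

theorem IsBimoduleMap.of_corners (h₁ : IsBimoduleMap C (fun c : C => π₁ ↑c) φ) {e : B}
    (he : IsIdempotentElem e) (hφe : ∀ a, φ a = e * φ a * e)
    (hD : ∀ c : C, π₁ c - π₂ c = (1 - e) * (π₁ c - π₂ c) * (1 - e)) :
    IsBimoduleMap C (fun c : C => π₂ ↑c) φ := by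
  intro a c₁ c₂
  have hleft : π₁ c₁ * φ a = π₂ c₁ * φ a := sub_eq_zero.mp <| by
    rw [← sub_mul]
    exact (he.mul_eq_zero_of_eq_corners (hφe a) (hD c₁)).1
  have hright : φ a * π₁ c₂ = φ a * π₂ c₂ := sub_eq_zero.mp <| by
    rw [← mul_sub]
    exact (he.mul_eq_zero_of_eq_corners (hφe a) (hD c₂)).2
  rw [h₁ a c₁ c₂, hleft, mul_assoc, hright, mul_assoc]

end Bimodule

theorem stmt9_general {H : Type*} [NormedAddCommGroup H] [InnerProductSpace ℂ H] [CompleteSpace H]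
    {A : Type*} [CStarAlgebra A]
    (M : VonNeumannAlgebra H)
    (C : StarSubalgebra ℂ A)
    (π₁ π₂ : A →⋆ₐ[ℂ] (H →L[ℂ] H))
    (φ : A →ₗ[ℂ] (H →L[ℂ] H)) (hφM : ∀ a : A, φ a ∈ M)
    (hbim₁ : IsBimoduleMap C (fun c : C => π₁ ↑c) φ) :
    IsBimoduleMap C (fun c : C => π₂ ↑c) φ ↔
      ∃ e : H →L[ℂ] H, e ∈ M ∧ IsSelfAdjoint e ∧ e * e = e ∧
        (∀ c : C, Commute e (π₁ ↑c) ∧ Commute e (π₂ ↑c)) ∧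
        (∀ a : A, φ a = e * φ a * e) ∧
        (∀ c : C, π₁ ↑c - π₂ ↑c = (1 - e) * (π₁ ↑c - π₂ ↑c) * (1 - e)) := by
  constructor
  · intro hbim₂
    set S := Set.range φ ∪ star (Set.range φ)
    set e := (closedSpanRanges S).starProjection
    have hSM : S ⊆ M := by
      rintro _ (⟨a, rfl⟩ | ⟨a, ha⟩)
      · exact hφM a
      · simpa [ha] using star_mem (hφM a)
    have hcomm (π : A →⋆ₐ[ℂ] (H →L[ℂ] H)) (hπ : IsBimoduleMap C (fun c : C => π ↑c) φ) (c : C) :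
        Commute e (π c) :=
      commute_starProjection_closedSpanRanges (hπ.mul_mem_range_union_star c)
        (by simpa only [StarMemClass.coe_star, map_star] using
          hπ.mul_mem_range_union_star (star c))
    have hDe (c : C) : (π₁ c - π₂ c) * e = 0 :=
      mul_starProjection_closedSpanRanges_eq_zero (hbim₁.sub_mul_eq_zero hbim₂ c)
    refine ⟨e, starProjection_closedSpanRanges_mem M hSM, isSelfAdjoint_starProjection _,
      Submodule.isIdempotentElem_starProjection _, fun c => ⟨hcomm π₁ hbim₁ c, hcomm π₂ hbim₂ c⟩,
      fun a => ?_, fun c => ?_⟩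
    · rw [starProjection_closedSpanRanges_mul (Or.inl ⟨a, rfl⟩),
        mul_starProjection_closedSpanRanges (Or.inr (by simp))]
    · refine eq_one_sub_mul_mul_one_sub ?_ (hDe c)
      rw [((hcomm π₁ hbim₁ c).sub_right (hcomm π₂ hbim₂ c)).eq, hDe c]
  · rintro ⟨e, -, -, he, -, hφe, hD⟩
    exact hbim₁.of_corners he hφe hD

/-- Uniqueness of the bimodule homomorphism: given unital ⋆-homomorphisms `π₁, π₂ : A → M`
and a completely positive `φ : A → M` which is a `C`-bimodule map with respect to `π₁`, the
map `φ` is a `C`-bimodule map with respect to `π₂` iff there is a projection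
`e ∈ π₁(C)′ ∩ π₂(C)′` with `φ(A) ⊆ eMe` and `(π₁ - π₂)(C) ⊆ e^⊥ M e^⊥`. -/
theorem stmt9 {H : Type*} [NormedAddCommGroup H] [InnerProductSpace ℂ H] [CompleteSpace H]
    {A : Type*} [CStarAlgebra A]
    (M : VonNeumannAlgebra H)
    (C : StarSubalgebra ℂ A) (hC : IsClosed (C : Set A))
    (π₁ π₂ : A →⋆ₐ[ℂ] (H →L[ℂ] H))
    (hπ₁M : ∀ a : A, π₁ a ∈ M) (hπ₂M : ∀ a : A, π₂ a ∈ M)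
    (φ : A →ₗ[ℂ] (H →L[ℂ] H)) (hφM : ∀ a : A, φ a ∈ M)
    (hφcp : CompletelyPositive φ)
    (hbim₁ : IsBimoduleMap C (fun c : C => π₁ ↑c) φ) :
    IsBimoduleMap C (fun c : C => π₂ ↑c) φ ↔
      ∃ e : H →L[ℂ] H, e ∈ M ∧ IsSelfAdjoint e ∧ e * e = e ∧
        (∀ c : C, Commute e (π₁ ↑c) ∧ Commute e (π₂ ↑c)) ∧
        (∀ a : A, φ a = e * φ a * e) ∧
        (∀ c : C, π₁ ↑c - π₂ ↑c = (1 - e) * (π₁ ↑c - π₂ ↑c) * (1 - e)) :=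
  stmt9_general M C π₁ π₂ φ hφM hbim₁
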